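/- Special case of the inner-approximation theorem for n = r (whole co-domain): if f : D ⊆ ℝ^m → ℝ^n is a C¹ submersion (derivative surjective at every point of D), u ⊆ D is a compact box, Y ⊆ ℝ^n is a box with Y ∩ f(∂u) = ∅ and f(ũ) ∈ Y for some ũ ∈ u, then Y ⊆ f(u); in particular Y is contained in the range of f. -/

import Mathlib

/-!
Let `K = f(u)`, a compact and hence closed set. If `f x ∈ Y` with `x ∈ u`, then `x` is not on the
frontier of `u`, so `x` is an interior point; since `Df(x)` is surjective, `f` is open at `x`
(surjective inverse function theorem) and `f x` is an interior point of `K`. Thus `Y ∩ K` is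
relatively clopen in the connected box `Y` and nonempty, so `Y ⊆ K`.
-/

open Set Filter Topology

theorem IsPreconnected.subset_of_inter_subset_interior {X : Type*} [TopologicalSpace X]
    {Y K : Set X} (hY : IsPreconnected Y) (hK : IsClosed K) (hne : (Y ∩ K).Nonempty)
    (h : Y ∩ K ⊆ interior K) : Y ⊆ K := by
  have hY_int : Y ⊆ interior K := by
    refine hY.subset_of_closure_inter_subset isOpen_interior ?_ ?_
    · obtain ⟨y, hy⟩ := hne
      exact ⟨y, hy.1, h hy⟩
    · rintro y ⟨hyK, hyY⟩
      exact h ⟨hyY, closure_minimal interior_subset hK hyK⟩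
  exact hY_int.trans interior_subset

section Submersion

variable {E F : Type*} [NormedAddCommGroup E] [NormedSpace ℝ E] [CompleteSpace E]
  [NormedAddCommGroup F] [NormedSpace ℝ F] [CompleteSpace F]

theorem ContDiffAt.image_mem_nhds_of_surjective_fderiv {f : E → F} {x : E}
    (hf : ContDiffAt ℝ 1 f x) (hsurj : Function.Surjective (fderiv ℝ f x)) {s : Set E}
    (hs : s ∈ 𝓝 x) : f '' s ∈ 𝓝 (f x) := by
  have hmap : map f (𝓝 x) = 𝓝 (f x) :=
    (hf.hasStrictFDerivAt one_ne_zero).map_nhds_eq_of_surj (LinearMap.range_eq_top.2 hsurj)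
  exact hmap ▸ image_mem_map hs

theorem subset_image_of_disjoint_image_frontier {f : E → F} {u : Set E} {Y : Set F}
    (hu : IsCompact u) (hf : ∀ x ∈ u, ContDiffAt ℝ 1 f x)
    (hsurj : ∀ x ∈ u, Function.Surjective (fderiv ℝ f x)) (hY : IsPreconnected Y)
    (hdisj : Disjoint Y (f '' frontier u)) (hmem : (Y ∩ f '' u).Nonempty) :
    Y ⊆ f '' u := by
  have hK : IsClosed (f '' u) :=
    (hu.image_of_continuousOn fun x hx => (hf x hx).continuousAt.continuousWithinAt).isClosed
  refine hY.subset_of_inter_subset_interior hK hmem ?_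
  rintro _ ⟨hyY, x, hx, rfl⟩
  have hx_int : x ∈ interior u := by
    by_contra hx_int
    have hx_fr : x ∈ frontier u := hu.isClosed.frontier_eq ▸ ⟨hx, hx_int⟩
    exact hdisj.notMem_of_mem_left hyY ⟨x, hx_fr, rfl⟩
  refine mem_interior_iff_mem_nhds.2 (mem_of_superset ?_ (image_mono interior_subset))
  exact (hf x hx).image_mem_nhds_of_surjective_fderiv (hsurj x hx)
    (isOpen_interior.mem_nhds hx_int)

end Submersion

theorem box_subset_range_submersion_general {m n : ℕ}
    (D : Set (Fin m → ℝ)) (hD : IsOpen D)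
    (f : (Fin m → ℝ) → (Fin n → ℝ)) (hf : ContDiffOn ℝ 1 f D)
    (hrank : ∀ x ∈ D, Function.Surjective (fderiv ℝ f x))
    (a b : Fin m → ℝ)
    (u : Set (Fin m → ℝ)) (hu : u = Set.univ.pi fun i => Set.Icc (a i) (b i))
    (huD : u ⊆ D)
    (c d : Fin n → ℝ)
    (Y : Set (Fin n → ℝ)) (hY : Y = Set.univ.pi fun i => Set.Icc (c i) (d i))
    (hdisj : Y ∩ f '' (frontier u) = ∅)
    (hmem : ∃ u0 ∈ u, f u0 ∈ Y) :
    Y ⊆ f '' u := by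
  have hu_compact : IsCompact u := hu ▸ isCompact_univ_pi fun i => isCompact_Icc
  have hY_conn : IsPreconnected Y :=
    hY ▸ (convex_pi fun i _ => convex_Icc (c i) (d i)).isPreconnected
  obtain ⟨u0, hu0, hfu0⟩ := hmem
  exact subset_image_of_disjoint_image_frontier hu_compact
    (fun x hx => hf.contDiffAt (hD.mem_nhds (huD hx))) (fun x hx => hrank x (huD hx)) hY_conn
    (disjoint_iff_inter_eq_empty.2 hdisj) ⟨f u0, hfu0, u0, hu0, rfl⟩

/-- Special case `n = r`: for a C¹ submersion `f : D ⊆ ℝ^m → ℝ^n`, a compact box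
`u ⊆ D` and a box `Y` with `Y ∩ f(∂u) = ∅` and `f(u0) ∈ Y` for some `u0 ∈ u`, one has
`Y ⊆ f(u)`. -/
theorem box_subset_range_submersion {m n : ℕ}
    (D : Set (Fin m → ℝ)) (hD : IsOpen D)
    (f : (Fin m → ℝ) → (Fin n → ℝ)) (hf : ContDiffOn ℝ 1 f D)
    (hrank : ∀ x ∈ D, Function.Surjective (fderiv ℝ f x))
    (a b : Fin m → ℝ) (hab : ∀ i, a i ≤ b i)
    (u : Set (Fin m → ℝ)) (hu : u = Set.univ.pi fun i => Set.Icc (a i) (b i))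
    (huD : u ⊆ D)
    (c d : Fin n → ℝ) (hcd : ∀ i, c i ≤ d i)
    (Y : Set (Fin n → ℝ)) (hY : Y = Set.univ.pi fun i => Set.Icc (c i) (d i))
    (hdisj : Y ∩ f '' (frontier u) = ∅)
    (hmem : ∃ u0 ∈ u, f u0 ∈ Y) :
    Y ⊆ f '' u :=
  box_subset_range_submersion_general D hD f hf hrank a b u hu huD c d Y hY hdisj hmem
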